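/- Let ζ₁₁ = exp(2πi/11) ∈ ℂ, ξ = ζ₁₁ + ζ₁₁⁻¹, and let L be the smallest subfield of ℂ containing i√3 and ξ (that is, L = ℚ(√−3, ξ)). Then ξ − 1 is not a square in L: there is no v ∈ L with v² = ξ − 1. -/

import Mathlib

/-!
Put `x = 2 cos(2π/11)`, so `ξ = x`. Every element of `L = ℚ(ξ)(√−3)` is `p(ξ) + q(ξ)√−3` with
`p, q ∈ ℚ[X]`, and `p(ξ), q(ξ)` are real. A square root of the positive real number `ξ − 1` is
real, so `q(ξ) = 0` and `p(x)² = x − 1`. The Galois conjugation `ζ ↦ ζ²` of `ℚ(ζ₁₁)` carries this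
polynomial relation to `p(x')² = x' − 1` with `x' = 2 cos(4π/11) < 1`, impossible for the real
number `p(x')`.
-/

open Complex Polynomial Real

theorem IsPrimitiveRoot.inv_eq_pow_pred {K : Type*} [Field K] {n : ℕ} (hn : 0 < n) {η : K}
    (hη : IsPrimitiveRoot η n) : η⁻¹ = η ^ (n - 1) :=
  inv_eq_of_mul_eq_one_right (by rw [← pow_succ', Nat.sub_add_cancel hn, hη.pow_eq_one])

theorem IsPrimitiveRoot.aeval_add_inv_eq_zero {K : Type*} [Field K] [CharZero K] {n : ℕ}
    (hn : 0 < n) {ζ μ : K} (hζ : IsPrimitiveRoot ζ n) (hμ : IsPrimitiveRoot μ n) {f : ℚ[X]}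
    (hf : aeval (ζ + ζ⁻¹) f = 0) : aeval (μ + μ⁻¹) f = 0 := by
  have hcomp : ∀ η : K, IsPrimitiveRoot η n →
      aeval η (f.comp (X + X ^ (n - 1))) = aeval (η + η⁻¹) f := fun η hη => by
    rw [aeval_comp, map_add, map_pow, aeval_X, hη.inv_eq_pow_pred hn]
  have hdvd : minpoly ℚ μ ∣ f.comp (X + X ^ (n - 1)) := by
    rw [← cyclotomic_eq_minpoly_rat hμ hn, cyclotomic_eq_minpoly_rat hζ hn]
    exact minpoly.dvd ℚ ζ (by rw [hcomp ζ hζ, hf])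
  rw [← hcomp μ hμ, aeval_eq_zero_of_dvd_aeval_eq_zero hdvd (minpoly.aeval ℚ μ)]

theorem Complex.exp_mul_I_add_inv (θ : ℝ) :
    exp (θ * I) + (exp (θ * I))⁻¹ = ((2 * Real.cos θ : ℝ) : ℂ) := by
  rw [← exp_neg, ← neg_mul, ← two_cos, ofReal_mul, ofReal_cos, ofReal_ofNat]

theorem Complex.ofReal_aeval {R : Type*} [CommSemiring R] [Algebra R ℝ] [Algebra R ℂ]
    [IsScalarTower R ℝ ℂ] (x : ℝ) (p : R[X]) : ((aeval x p : ℝ) : ℂ) = aeval (x : ℂ) p :=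
  (aeval_algebraMap_apply ℂ x p).symm

theorem aeval_two_cos_eq_zero_of_coprime {n k : ℕ} (hn : 0 < n) (hk : k.Coprime n) {f : ℚ[X]}
    (hf : aeval (2 * Real.cos (2 * π / n)) f = 0) :
    aeval (2 * Real.cos (2 * π * k / n)) f = 0 := by
  have hroot : ∀ j : ℕ, j.Coprime n → IsPrimitiveRoot (exp ((2 * π * j / n : ℝ) * I)) n :=
    fun j hj => by
      convert isPrimitiveRoot_exp_of_coprime j n hn.ne' hj using 2
      push_cast; ring_nf
  have h := (hroot 1 (Nat.coprime_one_left n)).aeval_add_inv_eq_zero (f := f) hn (hroot k hk)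
  simp only [exp_mul_I_add_inv, Nat.cast_one, mul_one] at h
  simpa only [← ofReal_aeval, ofReal_eq_zero] using h (by rw [← ofReal_aeval, hf, ofReal_zero])

theorem Complex.im_eq_zero_of_sq_eq_ofReal {z : ℂ} {r : ℝ} (hr : 0 ≤ r) (h : z ^ 2 = r) :
    z.im = 0 := by
  have hsq : z ^ 2 = ((√r : ℝ) : ℂ) ^ 2 := by rw [← ofReal_pow, Real.sq_sqrt hr, h]
  rcases sq_eq_sq_iff_eq_or_eq_neg.mp hsq with hz | hz <;> simp [hz]

theorem exists_aeval_add_aeval_mul_of_mem_adjoin_pair {F E : Type*} [Field F] [Field E]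
    [Algebra F E] {d x : E} {c : F} (hd : d ^ 2 = algebraMap F E c) (hx : IsIntegral F x)
    {v : E} (hv : v ∈ IntermediateField.adjoin F {d, x}) :
    ∃ p q : F[X], v = aeval x p + aeval x q * d := by
  have hdint : IsIntegral F d := .of_pow two_pos (hd ▸ isIntegral_algebraMap)
  rw [← IntermediateField.mem_toSubalgebra, IntermediateField.adjoin_toSubalgebra_of_isAlgebraic
    (by rintro y (rfl | rfl); exacts [hdint.isAlgebraic, hx.isAlgebraic])] at hv
  induction hv using Algebra.adjoin_induction with
  | mem y hy =>
    rcases hy with rfl | rfl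
    exacts [⟨0, 1, by simp⟩, ⟨X, 0, by simp⟩]
  | algebraMap r => exact ⟨C r, 0, by simp⟩
  | add y z _ _ hy hz =>
    obtain ⟨p, q, rfl⟩ := hy
    obtain ⟨p', q', rfl⟩ := hz
    exact ⟨p + p', q + q', by simp only [map_add]; ring⟩
  | mul y z _ _ hy hz =>
    obtain ⟨p, q, rfl⟩ := hy
    obtain ⟨p', q', rfl⟩ := hz
    refine ⟨p * p' + C c * q * q', p * q' + q * p', ?_⟩
    simp only [map_add, map_mul, aeval_C]
    linear_combination (aeval x q * aeval x q') * hd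

theorem sq_aeval_ne_two_cos_two_pi_div_eleven_sub_one (p : ℚ[X]) :
    (aeval (2 * Real.cos (2 * π / 11)) p) ^ 2 ≠ 2 * Real.cos (2 * π / 11) - 1 := by
  intro h
  have hroot : aeval (2 * Real.cos (2 * π / (11 : ℕ))) (p ^ 2 - X + 1) = 0 := by
    simp [h]
  have hconj := aeval_two_cos_eq_zero_of_coprime (k := 2) (by norm_num) (by norm_num) hroot
  have hcos : Real.cos (2 * π * 2 / 11) < 1 / 2 := by
    rw [← Real.cos_pi_div_three]
    exact Real.cos_lt_cos_of_nonneg_of_le_pi (by positivity) (by linarith [pi_pos])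
      (by linarith [pi_pos])
  simp only [map_add, map_sub, map_pow, aeval_X, map_one, Nat.cast_ofNat] at hconj
  nlinarith [sq_nonneg (aeval (2 * Real.cos (2 * π * 2 / 11)) p)]

/-- Example 4 of the paper (5-relay MIMO code, anisotropy): with
`ξ = ζ₁₁ + ζ₁₁⁻¹` and `L = ℚ(√−3, ξ) ⊂ ℂ`, the element `ξ − 1` is not a
square in `L`. -/
theorem xi11_sub_one_not_square
    (ζ : ℂ) (hζ : ζ = Complex.exp (2 * Real.pi * Complex.I / 11))
    (ξ : ℂ) (hξ : ξ = ζ + ζ⁻¹)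
    (L : IntermediateField ℚ ℂ)
    (hL : L = IntermediateField.adjoin ℚ {Complex.I * Real.sqrt 3, ξ}) :
    ∀ v : ℂ, v ∈ L → v ^ 2 ≠ ξ - 1 := by
  intro v hv hsq
  have hprim : IsPrimitiveRoot ζ 11 := hζ ▸ by simpa using isPrimitiveRoot_exp 11 (by norm_num)
  have hξint : IsIntegral ℚ ξ := hξ ▸
    (hprim.isIntegral (by norm_num)).tower_top.add (hprim.inv.isIntegral (by norm_num)).tower_top
  have hd : (I * √3) ^ 2 = algebraMap ℚ ℂ (-3) := by
    rw [mul_pow, I_sq, ← ofReal_pow, Real.sq_sqrt (by norm_num)]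
    simp
  obtain ⟨p, q, rfl⟩ := exists_aeval_add_aeval_mul_of_mem_adjoin_pair hd hξint (hL ▸ hv)
  set x : ℝ := 2 * Real.cos (2 * π / 11) with hx
  have hξx : ξ = x := by
    rw [hξ, hζ, hx, ← exp_mul_I_add_inv]
    push_cast
    ring_nf
  have hcos : 1 / 2 ≤ Real.cos (2 * π / 11) := by
    rw [← Real.cos_pi_div_three]
    exact Real.cos_le_cos_of_nonneg_of_le_pi (by positivity) (by linarith [pi_pos])
      (by linarith [pi_pos])
  rw [hξx, ← ofReal_aeval, ← ofReal_aeval] at hsq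
  have hq : aeval x q = 0 := by
    have him := im_eq_zero_of_sq_eq_ofReal (r := x - 1) (by linarith) (by rw [hsq]; push_cast; rfl)
    simpa using him
  rw [hq, ofReal_zero, zero_mul, add_zero] at hsq
  exact sq_aeval_ne_two_cos_two_pi_div_eleven_sub_one p (by exact_mod_cast hsq)
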